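/- The map phi defined by the first-even-return decomposition (phi(1·X·0·V) = 1·X·0·phi(V) for above-diagonal excursions, phi(0·Y·1·V) = 1·phi(V)·0·comp(Y) for below-diagonal excursions) is injective on odd-diagonal-avoiding balanced words of length 4n. -/

import Mathlib

def IsWord (l : List ℕ) : Prop := ∀ x ∈ l, x = 0 ∨ x = 1

def IsDyck (l : List ℕ) : Prop :=
  IsWord l ∧ l.count 1 = l.count 0 ∧ ∀ t, (l.take t).count 0 ≤ (l.take t).count 1

def IsPrimitiveExcursion (l : List ℕ) : Prop :=
  IsWord l ∧ l ≠ [] ∧ l.count 1 = l.count 0 ∧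
    ∀ t, 0 < t → t < l.length → (l.take t).count 1 ≠ (l.take t).count 0

def comp (l : List ℕ) : List ℕ := l.map (fun x => 1 - x)

def OddDiagAvoiding (l : List ℕ) : Prop :=
  ∀ t, t ≤ l.length → (l.take t).count 1 = (l.take t).count 0 → 4 ∣ t

lemma word_count_add (l : List ℕ) (hw : IsWord l) : l.count 0 + l.count 1 = l.length := by
  induction l with
  | nil => simp
  | cons a l ih =>
    have ha := hw a List.mem_cons_self
    have ih' := ih (fun x hx => hw x (List.mem_cons_of_mem a hx))
    rcases ha with rfl | rfl <;> simp [List.count_cons] <;> omega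

lemma word_take (l : List ℕ) (hw : IsWord l) (t : ℕ) : IsWord (l.take t) :=
  fun x hx => hw x ((List.take_sublist t l).mem hx)

lemma count_take_le (l : List ℕ) (a t : ℕ) : (l.take t).count a ≤ (l.take (t+1)).count a := by
  have h1 : (l.take (t+1)).take t = l.take t := by
    rw [List.take_take, min_eq_left (by omega)]
  have h : (l.take t).Sublist (l.take (t+1)) := h1 ▸ List.take_sublist t _
  exact h.count_le a

lemma excursion_sign (U : List ℕ) (hU : IsPrimitiveExcursion U) (h1 : U.head? = some 1) :
    ∀ t, 0 < t → t < U.length → (U.take t).count 0 < (U.take t).count 1 := by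
  obtain ⟨hw, hne, hbal, hprim⟩ := hU
  intro t
  induction t with
  | zero => omega
  | succ t ih =>
    intro _ hlt
    rcases Nat.eq_zero_or_pos t with rfl | ht
    · obtain ⟨a, L, rfl⟩ := List.exists_cons_of_ne_nil hne
      simp only [List.head?_cons, Option.some.injEq] at h1
      subst h1
      simp
    · have h01 := ih ht (by omega)
      have m0 := count_take_le U 0 t
      have m1 := count_take_le U 1 t
      have s1 : (U.take t).count 0 + (U.take t).count 1 = t := by
        have := word_count_add _ (word_take U hw t)
        rwa [List.length_take, min_eq_left (by omega)] at this
      have s2 : (U.take (t+1)).count 0 + (U.take (t+1)).count 1 = t+1 := by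
        have := word_count_add _ (word_take U hw (t+1))
        rwa [List.length_take, min_eq_left (by omega)] at this
      have hne' := hprim (t+1) (by omega) hlt
      omega

lemma struct_above (U : List ℕ) (hU : IsPrimitiveExcursion U) (h1 : U.head? = some 1) :
    IsDyck ((U.drop 1).dropLast) ∧ U = 1 :: ((U.drop 1).dropLast ++ [0]) ∧
      U.length = (U.drop 1).dropLast.length + 2 := by
  have hw := hU.1
  have hne := hU.2.1
  have hbal := hU.2.2.1
  obtain ⟨a, L, rfl⟩ := List.exists_cons_of_ne_nil hne
  simp only [List.head?_cons, Option.some.injEq] at h1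
  subst h1
  rcases List.eq_nil_or_concat L with rfl | ⟨X, b, hL⟩
  · simp [List.count_cons] at hbal
  · rw [List.concat_eq_append] at hL
    subst hL
    have hb : b = 0 ∨ b = 1 := hw b (by simp)
    have htake : ∀ t, t ≤ X.length → (1 :: (X ++ [b])).take (t+1) = 1 :: X.take t := by
      intro t ht
      rw [List.take_succ_cons, List.take_append_of_le_length ht]
    have hsign := excursion_sign _ hU rfl (X.length + 1) (by omega) (by simp)
    rw [htake X.length le_rfl, List.take_length] at hsign
    simp only [List.count_cons, List.count_append, List.count_singleton] at hsign hbal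
    -- b = 0
    rcases hb with rfl | rfl
    swap
    · exfalso; simp at hsign hbal; omega
    have hXbal : X.count 1 = X.count 0 := by simp at hsign hbal; omega
    have hXeq : ((1 :: (X ++ [0])).drop 1).dropLast = X := by
      simp [List.dropLast_concat]
    rw [hXeq]
    refine ⟨⟨fun x hx => hw x (by simp [hx]), hXbal, ?_⟩, rfl, by simp⟩
    intro t
    rcases le_or_gt X.length t with h | h
    · rw [List.take_of_length_le h]; omega
    · have hs := excursion_sign _ hU rfl (t+1) (by omega) (by simp; omega)
      rw [htake t (by omega)] at hs
      simp only [List.count_cons] at hs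
      simp at hs
      omega

lemma comp_word (l : List ℕ) : IsWord (comp l) := by
  intro x hx
  simp only [comp, List.mem_map] at hx
  obtain ⟨y, _, rfl⟩ := hx
  omega

lemma comp_comp (l : List ℕ) (hw : IsWord l) : comp (comp l) = l := by
  induction l with
  | nil => rfl
  | cons a l ih =>
    have ha := hw a (by simp)
    have ih' := ih (fun x hx => hw x (by simp [hx]))
    rcases ha with rfl | rfl <;> simp [comp] at ih' ⊢ <;> exact ih'

lemma comp_count (l : List ℕ) (hw : IsWord l) :
    (comp l).count 1 = l.count 0 ∧ (comp l).count 0 = l.count 1 := by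
  induction l with
  | nil => simp [comp]
  | cons a l ih =>
    have ha := hw a (by simp)
    obtain ⟨ih1, ih2⟩ := ih (fun x hx => hw x (by simp [hx]))
    rcases ha with rfl | rfl <;>
      simp only [comp, List.map_cons, List.count_cons] at ih1 ih2 ⊢ <;>
      simp [comp] at ih1 ih2 ⊢ <;> omega

lemma comp_length (l : List ℕ) : (comp l).length = l.length := by simp [comp]

lemma comp_take (l : List ℕ) (t : ℕ) : (comp l).take t = comp (l.take t) := by
  simp [comp, List.map_take]

lemma comp_prim (U : List ℕ) (hU : IsPrimitiveExcursion U) : IsPrimitiveExcursion (comp U) := by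
  obtain ⟨hw, hne, hbal, hprim⟩ := hU
  refine ⟨comp_word U, by simp [comp, hne], ?_, ?_⟩
  · rw [(comp_count U hw).1, (comp_count U hw).2, hbal]
  · intro t ht1 ht2
    rw [comp_length] at ht2
    rw [comp_take, (comp_count _ (word_take U hw t)).1, (comp_count _ (word_take U hw t)).2]
    exact fun h => hprim t ht1 ht2 h.symm

lemma struct_below (U : List ℕ) (hU : IsPrimitiveExcursion U) (h0 : U.head? = some 0) :
    IsDyck (comp ((U.drop 1).dropLast)) ∧ U = 0 :: ((U.drop 1).dropLast ++ [1]) ∧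
      U.length = (U.drop 1).dropLast.length + 2 ∧ IsWord ((U.drop 1).dropLast) := by
  have hYw : IsWord ((U.drop 1).dropLast) :=
    fun x hx => hU.1 x ((List.drop_sublist 1 U).mem ((List.dropLast_sublist _).mem hx))
  have hcp := comp_prim U hU
  have hh : (comp U).head? = some 1 := by
    obtain ⟨a, L, rfl⟩ := List.exists_cons_of_ne_nil hU.2.1
    simp only [List.head?_cons, Option.some.injEq] at h0
    subst h0
    rfl
  obtain ⟨hdy, heq, hlen⟩ := struct_above (comp U) hcp hh
  have hXc : ((comp U).drop 1).dropLast = comp ((U.drop 1).dropLast) := by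
    simp [comp, List.map_drop, List.map_dropLast]
  rw [hXc] at hdy heq hlen
  refine ⟨hdy, ?_, ?_, hYw⟩
  · have := congrArg comp heq
    rw [comp_comp U hU.1] at this
    rw [this]
    simp [comp, comp_comp _ hYw]
  · rw [← comp_length U, hlen, comp_length]

lemma strict_pre (A B : List ℕ) (hA : IsDyck A) (t : ℕ) (ht0 : 0 < t) (ht : t ≤ A.length + 1) :
    ((1 :: (A ++ 0 :: B)).take t).count 0 < ((1 :: (A ++ 0 :: B)).take t).count 1 := by
  obtain ⟨s, rfl⟩ : ∃ s, t = s + 1 := ⟨t - 1, by omega⟩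
  rw [List.take_succ_cons, List.take_append_of_le_length (by omega)]
  have := hA.2.2 s
  simp only [List.count_cons]
  simp
  omega

lemma eq_at (A B : List ℕ) (hA : IsDyck A) :
    ((1 :: (A ++ 0 :: B)).take (A.length + 2)).count 0
      = ((1 :: (A ++ 0 :: B)).take (A.length + 2)).count 1 := by
  have h : (1 :: (A ++ 0 :: B)).take (A.length + 2) = 1 :: (A ++ [0]) := by
    rw [show A ++ 0 :: B = (A ++ [0]) ++ B by simp, List.take_succ_cons,
      List.take_left' (by simp)]
  rw [h]
  have := hA.2.1
  simp only [List.count_cons, List.count_append, List.count_singleton]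
  simp
  omega

lemma split_unique {A A' B B' : List ℕ} (hA : IsDyck A) (hA' : IsDyck A')
    (h : (1:ℕ) :: (A ++ 0 :: B) = 1 :: (A' ++ 0 :: B')) : A = A' ∧ B = B' := by
  have hlen : A.length = A'.length := by
    by_contra hne
    rcases lt_or_gt_of_ne hne with hlt | hlt
    · have h1 := eq_at A B hA
      have h2 := strict_pre A' B' hA' (A.length + 2) (by omega) (by omega)
      rw [← h] at h2
      omega
    · have h1 := eq_at A' B' hA'
      have h2 := strict_pre A B hA (A'.length + 2) (by omega) (by omega)
      rw [h] at h2
      omega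
  injection h with _ h'
  obtain ⟨hAe, hBe⟩ := List.append_inj h' hlen
  exact ⟨hAe, by injection hBe⟩

lemma dyck_glue (X W : List ℕ) (hX : IsDyck X) (hW : IsDyck W) :
    IsDyck (1 :: (X ++ 0 :: W)) := by
  obtain ⟨hXw, hXb, hXp⟩ := hX
  obtain ⟨hWw, hWb, hWp⟩ := hW
  refine ⟨?_, ?_, ?_⟩
  · intro x hx
    simp only [List.mem_cons, List.mem_append] at hx
    rcases hx with rfl | hx | hx
    · right; rfl
    · exact hXw x hx
    · rcases hx with rfl | hx
      · left; rfl
      · exact hWw x hx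
  · simp only [List.count_cons, List.count_append]
    simp
    omega
  · intro t
    rcases Nat.eq_zero_or_pos t with rfl | ht0
    · simp
    rcases le_or_gt t (X.length + 1) with hle | hgt
    · exact le_of_lt (strict_pre X W ⟨hXw, hXb, hXp⟩ t ht0 hle)
    · obtain ⟨s, rfl⟩ : ∃ s, t = X.length + 2 + s := ⟨t - (X.length + 2), by omega⟩
      have hdec : (1 :: (X ++ 0 :: W)).take (X.length + 2 + s)
          = (1 :: (X ++ [0])) ++ W.take s := by
        rw [show (1:ℕ) :: (X ++ 0 :: W) = (1 :: (X ++ [0])) ++ W by simp,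
          List.take_append,
          List.take_of_length_le (by simp),
          show X.length + 2 + s - (1 :: (X ++ [0])).length = s by simp]
      rw [hdec]
      have := hWp s
      simp only [List.count_cons, List.count_append, List.count_singleton]
      simp
      omega

lemma decomp (P : List ℕ) (hw : IsWord P) (hb : P.count 1 = P.count 0)
    (ho : OddDiagAvoiding P) (hne : P ≠ []) :
    ∃ U V, P = U ++ V ∧ IsPrimitiveExcursion U ∧ 4 ∣ U.length ∧ 0 < U.length ∧
      IsWord V ∧ V.count 1 = V.count 0 ∧ OddDiagAvoiding V := by
  classical
  have hQ : ∃ k, 0 < k ∧ (P.take k).count 1 = (P.take k).count 0 :=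
    ⟨P.length, List.length_pos_iff.mpr hne, by rw [List.take_length]; exact hb⟩
  set k := Nat.find hQ with hk
  obtain ⟨hk0, hkbal⟩ := Nat.find_spec hQ
  rw [← hk] at hk0 hkbal
  have hkle : k ≤ P.length := Nat.find_le ⟨List.length_pos_iff.mpr hne, by rw [List.take_length]; exact hb⟩
  have htake : ∀ t, t ≤ k → (P.take k).take t = P.take t := by
    intro t ht
    rw [List.take_take, min_eq_left ht]
  have hUlen : (P.take k).length = k := by rw [List.length_take, min_eq_left hkle]
  have hprim : IsPrimitiveExcursion (P.take k) := by
    refine ⟨word_take P hw k, ?_, hkbal, ?_⟩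
    · intro h
      rw [h] at hUlen
      simp at hUlen
      omega
    · intro t ht1 ht2
      rw [hUlen] at ht2
      rw [htake t (by omega)]
      intro hbt
      exact Nat.find_min hQ (m := t) ht2 ⟨ht1, hbt⟩
  have h4 : 4 ∣ k := ho k hkle hkbal
  have hPsplit : P = P.take k ++ P.drop k := (List.take_append_drop k P).symm
  have hcnt : ∀ a, P.count a = (P.take k).count a + (P.drop k).count a := by
    intro a
    conv_lhs => rw [hPsplit]
    rw [List.count_append]
  refine ⟨P.take k, P.drop k, hPsplit, hprim, by rwa [hUlen], by omega, ?_, ?_, ?_⟩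
  · exact fun x hx => hw x ((List.drop_sublist k P).mem hx)
  · have h1 := hcnt 1
    have h0 := hcnt 0
    omega
  · intro t ht hbt
    have hadd : P.take (k + t) = P.take k ++ (P.drop k).take t := List.take_add
    have hbal' : (P.take (k + t)).count 1 = (P.take (k + t)).count 0 := by
      rw [hadd, List.count_append, List.count_append, hkbal, hbt]
    have hle : k + t ≤ P.length := by
      rw [List.length_drop] at ht
      omega
    have := ho (k + t) hle hbal'
    omega

lemma phi_spec (phi : List ℕ → List ℕ)
    (h_nil : phi [] = [])
    (h_above : ∀ U V : List ℕ, IsPrimitiveExcursion U → U.head? = some 1 →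
      phi (U ++ V) = 1 :: (U.drop 1).dropLast ++ 0 :: phi V)
    (h_below : ∀ U V : List ℕ, IsPrimitiveExcursion U → U.head? = some 0 →
      phi (U ++ V) = 1 :: phi V ++ 0 :: comp ((U.drop 1).dropLast)) :
    ∀ m P, P.length ≤ m → IsWord P → P.count 1 = P.count 0 → OddDiagAvoiding P →
      IsDyck (phi P) ∧ (phi P).length = P.length := by
  intro m
  induction m with
  | zero =>
    intro P hl _ _ _
    have hP : P = [] := List.length_eq_zero_iff.mp (by omega)
    subst hP
    rw [h_nil]
    exact ⟨⟨fun x hx => by simp at hx, by simp, by simp⟩, rfl⟩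
  | succ m ih =>
    intro P hl hw hb ho
    rcases eq_or_ne P [] with rfl | hne
    · rw [h_nil]
      exact ⟨⟨fun x hx => by simp at hx, by simp, by simp⟩, rfl⟩
    obtain ⟨U, V, rfl, hU, hU4, hUpos, hVw, hVb, hVo⟩ := decomp P hw hb ho hne
    have hVl : V.length ≤ m := by
      rw [List.length_append] at hl
      omega
    obtain ⟨hVd, hVlen⟩ := ih V hVl hVw hVb hVo
    obtain ⟨a, L, hUe⟩ := List.exists_cons_of_ne_nil hU.2.1
    have ha : a = 0 ∨ a = 1 := hU.1 a (by rw [hUe]; exact List.mem_cons_self)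
    have hh : U.head? = some a := by rw [hUe]; rfl
    rcases ha with rfl | rfl
    · obtain ⟨hdY, hUrec, hUlen, hYw⟩ := struct_below U hU hh
      rw [h_below U V hU hh]
      constructor
      · exact dyck_glue (phi V) (comp ((U.drop 1).dropLast)) hVd hdY
      · simp only [List.length_cons, List.length_append, List.length_cons, comp_length]
        omega
    · obtain ⟨hdX, hUrec, hUlen⟩ := struct_above U hU hh
      rw [h_above U V hU hh]
      constructor
      · exact dyck_glue ((U.drop 1).dropLast) (phi V) hdX hVd
      · simp only [List.length_cons, List.length_append, List.length_cons]
        omega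

theorem phi_injective (n : ℕ) (phi : List ℕ → List ℕ)
    (h_nil : phi [] = [])
    (h_above : ∀ U V : List ℕ, IsPrimitiveExcursion U → U.head? = some 1 →
      phi (U ++ V) = 1 :: (U.drop 1).dropLast ++ 0 :: phi V)
    (h_below : ∀ U V : List ℕ, IsPrimitiveExcursion U → U.head? = some 0 →
      phi (U ++ V) = 1 :: phi V ++ 0 :: comp ((U.drop 1).dropLast)) :
    Set.InjOn phi {P : List ℕ | IsWord P ∧ P.count 1 = P.count 0 ∧
      OddDiagAvoiding P ∧ P.length = 4 * n} := by
  have spec := phi_spec phi h_nil h_above h_below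
  have key : ∀ m P P', P.length ≤ m →
      IsWord P → P.count 1 = P.count 0 → OddDiagAvoiding P →
      IsWord P' → P'.count 1 = P'.count 0 → OddDiagAvoiding P' →
      phi P = phi P' → P = P' := by
    intro m
    induction m with
    | zero =>
      intro P P' hl hw hb ho hw' hb' ho' heq
      have hP : P = [] := List.length_eq_zero_iff.mp (by omega)
      subst hP
      have hlen' := (spec P'.length P' le_rfl hw' hb' ho').2
      rw [← heq, h_nil] at hlen'
      exact (List.length_eq_zero_iff.mp hlen'.symm).symm
    | succ m ih =>
      intro P P' hl hw hb ho hw' hb' ho' heq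
      rcases eq_or_ne P [] with rfl | hne
      · have hlen' := (spec P'.length P' le_rfl hw' hb' ho').2
        rw [← heq, h_nil] at hlen'
        exact (List.length_eq_zero_iff.mp hlen'.symm).symm
      rcases eq_or_ne P' [] with rfl | hne'
      · have hlen := (spec P.length P le_rfl hw hb ho).2
        rw [heq, h_nil] at hlen
        exact List.length_eq_zero_iff.mp hlen.symm
      obtain ⟨U, V, rfl, hU, hU4, hUpos, hVw, hVb, hVo⟩ := decomp P hw hb ho hne
      obtain ⟨U', V', rfl, hU', hU4', hUpos', hVw', hVb', hVo'⟩ := decomp P' hw' hb' ho' hne'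
      have hVl : V.length ≤ m := by
        rw [List.length_append] at hl
        omega
      obtain ⟨a, L, hUe⟩ := List.exists_cons_of_ne_nil hU.2.1
      obtain ⟨a', L', hUe'⟩ := List.exists_cons_of_ne_nil hU'.2.1
      have ha : a = 0 ∨ a = 1 := hU.1 a (by rw [hUe]; exact List.mem_cons_self)
      have ha' : a' = 0 ∨ a' = 1 := hU'.1 a' (by rw [hUe']; exact List.mem_cons_self)
      have hh : U.head? = some a := by rw [hUe]; rfl
      have hh' : U'.head? = some a' := by rw [hUe']; rfl
      obtain ⟨hVd, hVlen⟩ := spec V.length V le_rfl hVw hVb hVo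
      obtain ⟨hVd', hVlen'⟩ := spec V'.length V' le_rfl hVw' hVb' hVo'
      have h4V : 4 ∣ V.length := hVo V.length le_rfl (by rw [List.take_length]; exact hVb)
      have h4V' : 4 ∣ V'.length := hVo' V'.length le_rfl (by rw [List.take_length]; exact hVb')
      rcases ha with rfl | rfl <;> rcases ha' with rfl | rfl
      · -- below / below
        obtain ⟨hdY, hUrec, hUlen, hYw⟩ := struct_below U hU hh
        obtain ⟨hdY', hUrec', hUlen', hYw'⟩ := struct_below U' hU' hh'
        rw [h_below U V hU hh, h_below U' V' hU' hh'] at heq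
        obtain ⟨hA, hB⟩ := split_unique hVd hVd' heq
        have hVV : V = V' := ih V V' hVl hVw hVb hVo hVw' hVb' hVo' hA
        have hYY : (U.drop 1).dropLast = (U'.drop 1).dropLast := by
          have hc := congrArg comp hB
          rwa [comp_comp _ hYw, comp_comp _ hYw'] at hc
        rw [hUrec, hUrec', hYY, hVV]
      · -- below / above : contradiction
        exfalso
        obtain ⟨hdX', hUrec', hUlen'⟩ := struct_above U' hU' hh'
        rw [h_below U V hU hh, h_above U' V' hU' hh'] at heq
        obtain ⟨hA, hB⟩ := split_unique hVd hdX' heq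
        have hlA : (phi V).length = ((U'.drop 1).dropLast).length := by rw [hA]
        omega
      · -- above / below : contradiction
        exfalso
        obtain ⟨hdX, hUrec, hUlen⟩ := struct_above U hU hh
        rw [h_above U V hU hh, h_below U' V' hU' hh'] at heq
        obtain ⟨hA, hB⟩ := split_unique hdX hVd' heq
        have hlA : ((U.drop 1).dropLast).length = (phi V').length := by rw [hA]
        omega
      · -- above / above
        obtain ⟨hdX, hUrec, hUlen⟩ := struct_above U hU hh
        obtain ⟨hdX', hUrec', hUlen'⟩ := struct_above U' hU' hh'
        rw [h_above U V hU hh, h_above U' V' hU' hh'] at heq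
        obtain ⟨hA, hB⟩ := split_unique hdX hdX' heq
        have hVV : V = V' := ih V V' hVl hVw hVb hVo hVw' hVb' hVo' hB
        rw [hUrec, hUrec', hA, hVV]
  intro P hP P' hP' heq
  obtain ⟨hw, hb, ho, -⟩ := hP
  obtain ⟨hw', hb', ho', -⟩ := hP'
  exact key P.length P P' le_rfl hw hb ho hw' hb' ho' heq
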